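/- For β ∈ (0, 1/2], define 𝔳(β) = −√(2^(1−2β)·(1 + 2^(1+β))) + 2^(−(1/2+β))·∫ from 0 to π/4 of √(((π√2)/4)^(2β)·x^(−2β) + 1 + 2^β) dx. Then 𝔳 is an increasing function on (0, 1/2] and 𝔳(β) < 0 for every β ∈ (0, 1/2]. In particular, for every α = 2β ∈ (0,1] the right unstable branch of W^u(c₋) in the planar dihedral problem reaches θ = π/2 with a negative value of v. -/
import Mathlib

open Real MeasureTheory

/-- The upper bound `𝔳(β)` for `v(π/2)` along the right unstable branch of
`W^u(c₋)` in the planar dihedral problem with homogeneous potential of degree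
`−α`, `α = 2β`. -/
noncomputable def planarUpperBound (β : ℝ) : ℝ :=
  -Real.sqrt ((2:ℝ) ^ (1 - 2*β) * (1 + (2:ℝ) ^ (1 + β))) +
    (2:ℝ) ^ (-(1/2 + β)) * ∫ x in (0:ℝ)..(π/4),
      Real.sqrt ((π * Real.sqrt 2 / 4) ^ (2*β) * x ^ (-(2*β)) + 1 + (2:ℝ) ^ β)

namespace PlanarAux

lemma sqrt_add_le' (a b : ℝ) (ha : 0 ≤ a) (hb : 0 ≤ b) :
    Real.sqrt (a+b) ≤ Real.sqrt a + Real.sqrt b := by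
  have h : a + b ≤ (Real.sqrt a + Real.sqrt b)^2 := by
    nlinarith [Real.sq_sqrt ha, Real.sq_sqrt hb, Real.sqrt_nonneg a, Real.sqrt_nonneg b]
  calc Real.sqrt (a+b) ≤ Real.sqrt ((Real.sqrt a + Real.sqrt b)^2) := Real.sqrt_le_sqrt h
    _ = Real.sqrt a + Real.sqrt b := Real.sqrt_sq (by positivity)

/-- The rescaled integrand. -/
noncomputable def g (β x : ℝ) : ℝ :=
  Real.sqrt ((π / (4*x)) ^ (2*β) / 2 + (1 + (2:ℝ) ^ (-β)) / 2)

/-- The rescaled upper-bound function, `planarUpperBound β = √(2^(-β)) * G β`. -/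
noncomputable def G (β : ℝ) : ℝ :=
  -(2 * Real.sqrt (1 + (2:ℝ) ^ (-β) / 2)) + ∫ x in (0:ℝ)..(π/4), g β x

lemma g_meas (β : ℝ) (hβ : 0 < β) : Measurable (g β) := by
  have h1 : Measurable fun x : ℝ => π / (4*x) :=
    measurable_const.div (measurable_const.mul measurable_id)
  have h2 : Measurable fun x : ℝ => (π / (4*x)) ^ (2*β) :=
    (Real.continuous_rpow_const (by linarith)).measurable.comp h1
  exact ((h2.div_const 2).add_const _).sqrt

lemma g_nonneg (β x : ℝ) : 0 ≤ g β x := Real.sqrt_nonneg _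

lemma s_pos (β : ℝ) : (0:ℝ) < 2 ^ (-β) := Real.rpow_pos_of_pos (by norm_num) _

lemma s_le_one {β : ℝ} (hβ : 0 < β) : (2:ℝ) ^ (-β) ≤ 1 := by
  calc (2:ℝ) ^ (-β) ≤ 2 ^ (0:ℝ) :=
        Real.rpow_le_rpow_of_exponent_le (by norm_num) (by linarith)
    _ = 1 := Real.rpow_zero 2

lemma w_ge_one {x : ℝ} (hx : x ∈ Set.Ioc (0:ℝ) (π/4)) : 1 ≤ π / (4*x) := by
  rw [le_div_iff₀ (by linarith [hx.1])]
  linarith [hx.2]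

/-- Dominating function. -/
noncomputable def u (x : ℝ) : ℝ := Real.sqrt (π/8) * x ^ (-(1/2) : ℝ) + 1

lemma u_int : IntervalIntegrable u volume 0 (π/4) :=
  ((intervalIntegral.intervalIntegrable_rpow' (by norm_num)).const_mul _).add
    intervalIntegrable_const

lemma g_le_u {β : ℝ} (hβ : 0 < β) (hβ' : β ≤ 1/2) {x : ℝ} (hx : x ∈ Set.Ioc (0:ℝ) (π/4)) :
    g β x ≤ u x := by
  have hw := w_ge_one hx
  have hx0 := hx.1
  have h1 : (π / (4*x)) ^ (2*β) ≤ π / (4*x) := by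
    calc (π / (4*x)) ^ (2*β) ≤ (π / (4*x)) ^ (1:ℝ) :=
          Real.rpow_le_rpow_of_exponent_le hw (by linarith)
      _ = π / (4*x) := Real.rpow_one _
  have h2 : g β x ≤ Real.sqrt (π/(8*x) + (1 + 2^(-β))/2) := by
    apply Real.sqrt_le_sqrt
    have : π/(4*x)/2 = π/(8*x) := by ring
    linarith [this ▸ (by linarith : (π / (4*x)) ^ (2*β)/2 ≤ π/(4*x)/2)]
  have h3 : Real.sqrt (π/(8*x) + (1 + 2^(-β))/2)
      ≤ Real.sqrt (π/(8*x)) + Real.sqrt ((1 + 2^(-β))/2) := by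
    refine sqrt_add_le' _ _ (by positivity) (by positivity)
  have h4 : Real.sqrt ((1 + 2^(-β))/2) ≤ 1 := by
    have h' : (1 + (2:ℝ)^(-β))/2 ≤ 1 := by linarith [s_le_one hβ]
    calc Real.sqrt ((1 + 2^(-β))/2) ≤ Real.sqrt 1 := Real.sqrt_le_sqrt h'
      _ = 1 := Real.sqrt_one
  have h5 : Real.sqrt (π/(8*x)) = Real.sqrt (π/8) * x ^ (-(1/2) : ℝ) := by
    rw [show π/(8*x) = (π/8) * x⁻¹ by ring, Real.sqrt_mul (by positivity)]
    congr 1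
    rw [Real.sqrt_inv, Real.rpow_neg hx0.le, Real.sqrt_eq_rpow]
  unfold u
  calc g β x ≤ Real.sqrt (π/(8*x)) + Real.sqrt ((1 + 2^(-β))/2) := le_trans h2 h3
    _ ≤ Real.sqrt (π/8) * x ^ (-(1/2) : ℝ) + 1 := by rw [h5]; linarith

lemma g_int {β : ℝ} (hβ : 0 < β) (hβ' : β ≤ 1/2) :
    IntervalIntegrable (g β) volume 0 (π/4) := by
  refine u_int.mono_fun' ((g_meas β hβ).aestronglyMeasurable) ?_
  rw [Set.uIoc_of_le (by positivity : (0:ℝ) ≤ π/4)]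
  refine (ae_restrict_iff' measurableSet_Ioc).2 (Filter.Eventually.of_forall fun x hx => ?_)
  have := g_le_u hβ hβ' hx
  have := g_nonneg β x
  simp only [Real.norm_eq_abs, abs_of_nonneg (g_nonneg β x)]
  exact g_le_u hβ hβ' hx

lemma pointwise_id {β : ℝ} (x : ℝ) (hx0 : 0 < x) :
    (2:ℝ)^(-(1/2+β)) * Real.sqrt ((π * Real.sqrt 2 / 4) ^ (2*β) * x ^ (-(2*β)) + 1 + (2:ℝ) ^ β)
      = Real.sqrt ((2:ℝ)^(-β)) * g β x := by
  unfold g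
  have e1 : (2:ℝ)^(-(1/2+β)) = Real.sqrt ((2:ℝ)^(-(1+2*β))) := by
    rw [Real.sqrt_eq_rpow, ← Real.rpow_mul (by norm_num : (0:ℝ) ≤ 2)]
    congr 1; ring
  rw [e1, ← Real.sqrt_mul (by positivity), ← Real.sqrt_mul (by positivity)]
  congr 1
  have hA : (π * Real.sqrt 2 / 4) ^ (2*β) = (π/4)^(2*β) * (2:ℝ)^β := by
    rw [show π * Real.sqrt 2 / 4 = (π/4) * Real.sqrt 2 by ring,
      Real.mul_rpow (by positivity) (Real.sqrt_nonneg 2)]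
    congr 1
    rw [Real.sqrt_eq_rpow, ← Real.rpow_mul (by norm_num : (0:ℝ) ≤ 2)]
    congr 1; ring
  have hB : (π/(4*x))^(2*β) = (π/4)^(2*β) * x^(-(2*β)) := by
    rw [show π/(4*x) = (π/4) * x⁻¹ by field_simp,
      Real.mul_rpow (by positivity) (inv_nonneg.2 hx0.le),
      Real.inv_rpow hx0.le, ← Real.rpow_neg hx0.le]
  have e4 : (2:ℝ)^(-(1+2*β)) = (2:ℝ)^(-β) * (2:ℝ)^(-β) * (2:ℝ)⁻¹ := by
    rw [show -(1+2*β) = -β + -β + -1 by ring, Real.rpow_add (by norm_num : (0:ℝ) < 2),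
      Real.rpow_add (by norm_num : (0:ℝ) < 2), Real.rpow_neg_one]
  have hst : (2:ℝ)^(-β) * (2:ℝ)^β = 1 := by
    rw [← Real.rpow_add (by norm_num : (0:ℝ) < 2)]; norm_num
  rw [hA, hB, e4]
  set s := (2:ℝ)^(-β); set t := (2:ℝ)^β; set P := (π/4)^(2*β) * x^(-(2*β))
  linear_combination (s*(P+1)/2) * hst

lemma first_id (β : ℝ) :
    Real.sqrt ((2:ℝ)^(1-2*β) * (1 + (2:ℝ)^(1+β)))
      = Real.sqrt ((2:ℝ)^(-β)) * (2 * Real.sqrt (1 + (2:ℝ)^(-β)/2)) := by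
  have h4 : Real.sqrt 4 = (2:ℝ) := by
    rw [show (4:ℝ) = 2^2 by norm_num]; exact Real.sqrt_sq (by norm_num)
  have key : Real.sqrt ((2:ℝ)^(-β)) * (2 * Real.sqrt (1 + (2:ℝ)^(-β)/2))
      = Real.sqrt ((2:ℝ)^(-β) * (4 * (1 + (2:ℝ)^(-β)/2))) := by
    rw [Real.sqrt_mul (by positivity : (0:ℝ) ≤ (2:ℝ)^(-β)),
      Real.sqrt_mul (by norm_num : (0:ℝ) ≤ 4), h4]
  rw [key]
  congr 1
  have e2 : (2:ℝ)^(1-2*β) = 2 * ((2:ℝ)^(-β) * (2:ℝ)^(-β)) := by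
    rw [show 1-2*β = 1 + -β + -β by ring, Real.rpow_add (by norm_num : (0:ℝ) < 2),
      Real.rpow_add (by norm_num : (0:ℝ) < 2), Real.rpow_one]
    ring
  have e3 : (2:ℝ)^(1+β) = 2 * (2:ℝ)^β := by
    rw [Real.rpow_add (by norm_num : (0:ℝ) < 2), Real.rpow_one]
  have hst : (2:ℝ)^(-β) * (2:ℝ)^β = 1 := by
    rw [← Real.rpow_add (by norm_num : (0:ℝ) < 2)]; norm_num
  rw [e2, e3]
  set s := (2:ℝ)^(-β); set t := (2:ℝ)^β
  linear_combination (4*s) * hst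

lemma identity {β : ℝ} (hβ : 0 < β) :
    planarUpperBound β = Real.sqrt ((2:ℝ)^(-β)) * G β := by
  have hInt : (2:ℝ)^(-(1/2+β)) * (∫ x in (0:ℝ)..(π/4),
      Real.sqrt ((π * Real.sqrt 2 / 4) ^ (2*β) * x ^ (-(2*β)) + 1 + (2:ℝ) ^ β))
      = Real.sqrt ((2:ℝ)^(-β)) * ∫ x in (0:ℝ)..(π/4), g β x := by
    rw [← intervalIntegral.integral_const_mul, ← intervalIntegral.integral_const_mul]
    apply intervalIntegral.integral_congr_ae
    refine Filter.Eventually.of_forall fun x hx => ?_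
    rw [Set.uIoc_of_le (by positivity : (0:ℝ) ≤ π/4)] at hx
    exact pointwise_id x hx.1
  unfold planarUpperBound G
  rw [hInt, first_id]
  ring

lemma u_integral :
    (∫ x in (0:ℝ)..(π/4), u x) = Real.sqrt (π/8) * (2 * Real.sqrt (π/4)) + π/4 := by
  unfold u
  rw [intervalIntegral.integral_add
      ((intervalIntegral.intervalIntegrable_rpow' (by norm_num)).const_mul _)
      intervalIntegrable_const,
    intervalIntegral.integral_const_mul, integral_rpow (Or.inl (by norm_num)),
    intervalIntegral.integral_const]
  have h0 : (0:ℝ) ^ (-(1/2) + 1 : ℝ) = 0 := by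
    rw [Real.zero_rpow (by norm_num)]
  have h1 : (π/4 : ℝ) ^ (-(1/2) + 1 : ℝ) = Real.sqrt (π/4) := by
    rw [show (-(1/2) + 1 : ℝ) = 1/2 by norm_num, ← Real.sqrt_eq_rpow]
  rw [h0, h1, smul_eq_mul]
  ring

lemma g_zero {β : ℝ} (hβ : 0 < β) : g β 0 = Real.sqrt ((1 + (2:ℝ)^(-β))/2) := by
  unfold g
  rw [show (4:ℝ)*0 = 0 by ring, div_zero, Real.zero_rpow (by positivity), zero_div, zero_add]

lemma s_lb {β : ℝ} (hβ' : β ≤ 1/2) : (0.7067:ℝ) ≤ (2:ℝ)^(-β) := by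
  have h2 : Real.sqrt 2 ≤ 1.415 := by
    nlinarith [Real.sq_sqrt (by norm_num : (0:ℝ) ≤ 2), Real.sqrt_nonneg 2]
  have hpos : 0 < Real.sqrt 2 := Real.sqrt_pos.2 (by norm_num)
  have he : (2:ℝ)^(-(1/2:ℝ)) = (Real.sqrt 2)⁻¹ := by
    rw [Real.rpow_neg (by norm_num), ← Real.sqrt_eq_rpow]
  have hmono : (2:ℝ)^(-(1/2:ℝ)) ≤ (2:ℝ)^(-β) :=
    Real.rpow_le_rpow_of_exponent_le (by norm_num) (by linarith)
  have : (0.7067:ℝ) ≤ (Real.sqrt 2)⁻¹ := by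
    rw [le_inv_comm₀ (by norm_num) hpos]; linarith
  linarith [he ▸ this]

lemma G_neg {β : ℝ} (hβ : 0 < β) (hβ' : β ≤ 1/2) : G β < 0 := by
  have hle : (∫ x in (0:ℝ)..(π/4), g β x) ≤ ∫ x in (0:ℝ)..(π/4), u x := by
    refine intervalIntegral.integral_mono_on (by positivity) (g_int hβ hβ') u_int fun x hx => ?_
    rcases eq_or_lt_of_le hx.1 with h0 | h0
    · rw [← h0, g_zero hβ]
      unfold u
      rw [Real.zero_rpow (by norm_num), mul_zero, zero_add]
      have h' : (1 + (2:ℝ)^(-β))/2 ≤ 1 := by linarith [s_le_one hβ]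
      calc Real.sqrt ((1 + (2:ℝ)^(-β))/2) ≤ Real.sqrt 1 := Real.sqrt_le_sqrt h'
        _ = 1 := Real.sqrt_one
    · exact g_le_u hβ hβ' ⟨h0, hx.2⟩
  rw [u_integral] at hle
  have hG : G β ≤ -(2 * Real.sqrt (1 + (2:ℝ)^(-β)/2))
      + (Real.sqrt (π/8) * (2 * Real.sqrt (π/4)) + π/4) := by
    unfold G; linarith
  set E := Real.sqrt (1 + (2:ℝ)^(-β)/2) with hE
  set A := Real.sqrt (π/8) with hA
  set B := Real.sqrt (π/4) with hB
  have hE2 : E^2 = 1 + (2:ℝ)^(-β)/2 := Real.sq_sqrt (by positivity)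
  have hA2 : A^2 = π/8 := Real.sq_sqrt (by positivity)
  have hB2 : B^2 = π/4 := Real.sq_sqrt (by positivity)
  have hs := s_lb hβ'
  have hpi : π < 3.15 := Real.pi_lt_d2
  have hpi2 : 3.14 < π := by linarith [Real.pi_gt_d6]
  have key : A*(2*B) + π/4 < 2*E := by
    nlinarith [sq_nonneg (A-B), sq_nonneg (2*A*B - 1.114), sq_nonneg (E - 1.163),
      mul_nonneg (Real.sqrt_nonneg (π/8)) (Real.sqrt_nonneg (π/4)),
      Real.sqrt_nonneg (1 + (2:ℝ)^(-β)/2), Real.sqrt_nonneg (π/8), Real.sqrt_nonneg (π/4)]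
  linarith

lemma g_pointwise_mono {β₁ β₂ : ℝ} (h1 : 0 < β₁) (h12 : β₁ < β₂) (h2 : β₂ ≤ 1/2)
    {x : ℝ} (hx : x ∈ Set.Ioc (0:ℝ) (π/4)) :
    g β₁ x ≤ g β₂ x + ((2:ℝ)^(-β₁) - (2:ℝ)^(-β₂)) /
      (2*(Real.sqrt (1 + (2:ℝ)^(-β₁)/2) + Real.sqrt (1 + (2:ℝ)^(-β₂)/2))) := by
  have hw : 1 ≤ π/(4*x) := w_ge_one hx
  have hw0 : (0:ℝ) ≤ π/(4*x) := by linarith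
  have hr1 : (0:ℝ) ≤ (π/(4*x))^(2*β₁) := Real.rpow_nonneg hw0 _
  have hr2 : (0:ℝ) ≤ (π/(4*x))^(2*β₂) := Real.rpow_nonneg hw0 _
  set s₁ := (2:ℝ)^(-β₁) with hs₁
  set s₂ := (2:ℝ)^(-β₂) with hs₂
  have hs₁0 : 0 < s₁ := s_pos β₁
  have hs₂0 : 0 < s₂ := s_pos β₂
  set u := Real.sqrt (1 + s₁/2) with hu
  set v := Real.sqrt (1 + s₂/2) with hv
  set q := g β₁ x with hq
  set p := g β₂ x with hp
  set m := Real.sqrt ((π/(4*x))^(2*β₁)/2 + (1 + s₂)/2) with hm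
  have hq2 : q^2 = (π/(4*x))^(2*β₁)/2 + (1 + s₁)/2 := Real.sq_sqrt (by positivity)
  have hm2 : m^2 = (π/(4*x))^(2*β₁)/2 + (1 + s₂)/2 := Real.sq_sqrt (by positivity)
  have hmp : m ≤ p := by
    apply Real.sqrt_le_sqrt
    have : (π/(4*x))^(2*β₁) ≤ (π/(4*x))^(2*β₂) :=
      Real.rpow_le_rpow_of_exponent_le hw (by linarith)
    linarith
  have hone1 : (1:ℝ) ≤ (π/(4*x))^(2*β₁) := Real.one_le_rpow hw (by linarith)
  have hvm : v ≤ m := Real.sqrt_le_sqrt (by linarith)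
  have huq : u ≤ q := Real.sqrt_le_sqrt (by linarith)
  have hu0 : 0 < u := Real.sqrt_pos.2 (by linarith)
  have hv0 : 0 < v := Real.sqrt_pos.2 (by linarith)
  have huv : 0 < 2*(u + v) := by linarith
  rw [← sub_le_iff_le_add', le_div_iff₀ huv]
  rcases le_or_gt q m with hcase | hcase
  · have h1' : q - p ≤ 0 := by linarith
    have hss : s₂ < s₁ := by
      rw [hs₁, hs₂]
      exact (Real.rpow_lt_rpow_left_iff (by norm_num : (1:ℝ) < 2)).2 (by linarith)
    nlinarith
  · have hqm : (q - m)*(q + m) = (s₁ - s₂)/2 := by nlinarith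
    have hm0 : 0 ≤ m := Real.sqrt_nonneg _
    have hq0 : 0 ≤ q := Real.sqrt_nonneg _
    nlinarith [mul_le_mul_of_nonneg_left (add_le_add huq hvm) (le_of_lt (sub_pos.2 hcase))]

lemma G_mono {β₁ β₂ : ℝ} (h1 : 0 < β₁) (h12 : β₁ < β₂) (h2 : β₂ ≤ 1/2) : G β₁ < G β₂ := by
  set s₁ := (2:ℝ)^(-β₁) with hs₁
  set s₂ := (2:ℝ)^(-β₂) with hs₂
  have hs₁0 : 0 < s₁ := s_pos β₁
  have hs₂0 : 0 < s₂ := s_pos β₂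
  have hss : s₂ < s₁ := by
    rw [hs₁, hs₂]
    exact (Real.rpow_lt_rpow_left_iff (by norm_num : (1:ℝ) < 2)).2 (by linarith)
  set u := Real.sqrt (1 + s₁/2) with hu
  set v := Real.sqrt (1 + s₂/2) with hv
  have hu2 : u^2 = 1 + s₁/2 := Real.sq_sqrt (by positivity)
  have hv2 : v^2 = 1 + s₂/2 := Real.sq_sqrt (by positivity)
  have hu0 : 0 < u := Real.sqrt_pos.2 (by positivity)
  have hv0 : 0 < v := Real.sqrt_pos.2 (by positivity)
  have huv : 0 < u + v := by linarith
  set D := (s₁ - s₂) / (2*(u + v)) with hD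
  have hae : (fun x => g β₁ x)
      ≤ᵐ[volume.restrict (Set.Icc (0:ℝ) (π/4))] fun x => g β₂ x + D := by
    have h0 : ∀ᵐ (x:ℝ) ∂(volume.restrict (Set.Icc (0:ℝ) (π/4))), x ≠ 0 := by
      refine ae_restrict_of_ae ?_
      rw [MeasureTheory.ae_iff]
      have : {a : ℝ | ¬ a ≠ 0} = {0} := by ext a; simp
      rw [this]
      exact measure_singleton 0
    have hmem : ∀ᵐ (x:ℝ) ∂(volume.restrict (Set.Icc (0:ℝ) (π/4))),
        x ∈ Set.Icc (0:ℝ) (π/4) := ae_restrict_mem measurableSet_Icc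
    filter_upwards [h0, hmem] with x hx0 hxI
    exact g_pointwise_mono h1 h12 h2 ⟨lt_of_le_of_ne hxI.1 (Ne.symm hx0), hxI.2⟩
  have hint : (∫ x in (0:ℝ)..(π/4), g β₁ x)
      ≤ ∫ x in (0:ℝ)..(π/4), (g β₂ x + D) :=
    intervalIntegral.integral_mono_ae_restrict (by positivity)
      (g_int h1 (by linarith)) ((g_int (by linarith) h2).add intervalIntegrable_const) hae
  have hsum : (∫ x in (0:ℝ)..(π/4), (g β₂ x + D))
      = (∫ x in (0:ℝ)..(π/4), g β₂ x) + (π/4)*D := by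
    rw [intervalIntegral.integral_add (g_int (by linarith) h2) intervalIntegrable_const,
      intervalIntegral.integral_const, smul_eq_mul, sub_zero]
  have hd : (2*u - 2*v)*(u + v) = s₁ - s₂ := by nlinarith
  have hkey : (π/4)*D < 2*u - 2*v := by
    have h8 : π < 8 := by linarith [Real.pi_lt_d2]
    have hpi0 : 0 < π := Real.pi_pos
    have e1 : (π/4)*D = ((π/8)*(s₁ - s₂))/(u+v) := by
      rw [hD, ← div_div, ← mul_div_assoc]
      congr 1; ring
    have e2 : 2*u - 2*v = (s₁ - s₂)/(u+v) := by
      rw [eq_div_iff huv.ne']; exact hd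
    rw [e1, e2, div_lt_div_iff_of_pos_right huv]
    nlinarith
  have hG1 : G β₁ = -(2*u) + ∫ x in (0:ℝ)..(π/4), g β₁ x := by unfold G; ring
  have hG2 : G β₂ = -(2*v) + ∫ x in (0:ℝ)..(π/4), g β₂ x := by unfold G; ring
  rw [hG1, hG2]
  have := hsum ▸ hint
  linarith

end PlanarAux


/-- `𝔳` is increasing on `(0, 1/2]` and negative there; in particular for
every `α = 2β ∈ (0,1]` the right unstable branch of `W^u(c₋)` reaches
`θ = π/2` with a negative value of `v`. -/
theorem planarUpperBound_strictMono_neg :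
    StrictMonoOn planarUpperBound (Set.Ioc (0:ℝ) (1/2)) ∧
      ∀ β ∈ Set.Ioc (0:ℝ) (1/2), planarUpperBound β < 0 := by
  constructor
  · intro β₁ hβ₁ β₂ hβ₂ h12
    rw [PlanarAux.identity hβ₁.1, PlanarAux.identity hβ₂.1]
    have hG12 : PlanarAux.G β₁ < PlanarAux.G β₂ := PlanarAux.G_mono hβ₁.1 h12 hβ₂.2
    have hG1neg : PlanarAux.G β₁ < 0 := PlanarAux.G_neg hβ₁.1 hβ₁.2
    have hsq2 : 0 < Real.sqrt ((2:ℝ)^(-β₂)) := Real.sqrt_pos.2 (PlanarAux.s_pos β₂)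
    have hsle : Real.sqrt ((2:ℝ)^(-β₂)) ≤ Real.sqrt ((2:ℝ)^(-β₁)) := by
      apply Real.sqrt_le_sqrt
      exact Real.rpow_le_rpow_of_exponent_le (by norm_num) (by linarith)
    calc Real.sqrt ((2:ℝ)^(-β₁)) * PlanarAux.G β₁
        ≤ Real.sqrt ((2:ℝ)^(-β₂)) * PlanarAux.G β₁ :=
          mul_le_mul_of_nonpos_right hsle hG1neg.le
      _ < Real.sqrt ((2:ℝ)^(-β₂)) * PlanarAux.G β₂ :=
          mul_lt_mul_of_pos_left hG12 hsq2
  · intro β hβ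
    rw [PlanarAux.identity hβ.1]
    exact mul_neg_of_pos_of_neg (Real.sqrt_pos.2 (PlanarAux.s_pos β))
      (PlanarAux.G_neg hβ.1 hβ.2)
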